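/- arXiv:2006.06157 — 6 statements merged into one kernel-verified Lean document; each statement's English description precedes it below -/
import Mathlib

section
/- For any collection of pairwise commuting invertible complex n×n matrices A_1, ..., A_k, there exist complex n×n matrices L_1, ..., L_k such that exp(L_j) = A_j for each j and the matrices L_1, ..., L_k pairwise commute. -/
/-!
The matrices `A j` generate a commutative finite-dimensional subalgebra `S`, so it suffices to
show that every unit of `S` is an exponential of an element of `S`; logarithms taken inside `S`
then commute automatically.

In a commutative Banach algebra `exp` is a homomorphism from `(S, +)` to the units, so its range
is a subgroup of the units. By the inverse function theorem at `0` the range is a neighbourhood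
of `1`, hence open, and its complement in the units, a union of cosets, is open as well. So the
range is all of the units as soon as these are connected. For a finite-dimensional complex
algebra they are even path-connected: the complex line through two units `a` and `b` meets the
non-units only at the finitely many `t` for which `-t⁻¹` lies in the spectrum of `a⁻¹ (b - a)`,
and a plane with finitely many points removed is path-connected.
-/

open NormedSpace Filter Topology Set

section FiniteDimensional

variable {K A : Type*} [Field K] [Ring A] [Algebra K A] [FiniteDimensional K A]

theorem spectrum.finite_of_finiteDimensional (a : A) : (spectrum K a).Finite := by
  refine (Module.End.finite_spectrum (Algebra.lmul K A a)).subset fun μ hμ h => hμ ?_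
  rw [spectrum.mem_resolventSet_iff] at h ⊢
  rwa [← (Algebra.lmul K A).commutes, ← map_sub, Algebra.lmul_isUnit_iff] at h

theorem finite_setOf_not_isUnit_add_smul {a : A} (ha : IsUnit a) (c : A) :
    {t : K | ¬IsUnit (a + t • c)}.Finite := by
  refine ((spectrum.finite_of_finiteDimensional (↑ha.unit⁻¹ * c)).image fun μ => -μ⁻¹).subset ?_
  intro t ht
  have ht0 : t ≠ 0 := by rintro rfl; simp [ha] at ht
  refine ⟨-t⁻¹, fun h => ht ?_, by simp⟩
  have factor : a + t • c =
      a * (algebraMap K A (-t) * (algebraMap K A (-t⁻¹) - ↑ha.unit⁻¹ * c)) := by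
    rw [mul_sub, ← map_mul, neg_mul_neg, mul_inv_cancel₀ ht0, map_one, map_neg, neg_mul,
      ← Algebra.smul_def, sub_neg_eq_add, mul_add, mul_one, mul_smul_comm, ← mul_assoc,
      ha.mul_val_inv, one_mul]
  rw [factor]
  exact ha.mul (((isUnit_iff_ne_zero.2 (neg_ne_zero.2 ht0)).map _).mul h)

theorem Subalgebra.isUnit_of_isUnit_val (S : Subalgebra K A) {a : S} (ha : IsUnit (a : A)) :
    IsUnit a :=
  IsArtinianRing.isUnit_of_nonZeroDivisor_of_isIntegral' (R := K)
    (comap_nonZeroDivisors_le_of_injective (f := S.val) Subtype.val_injective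
      ha.mem_nonZeroDivisors)

end FiniteDimensional

theorem isPathConnected_setOf_isUnit {A : Type*} [Ring A] [Algebra ℂ A] [FiniteDimensional ℂ A]
    [TopologicalSpace A] [ContinuousAdd A] [ContinuousSMul ℂ A] :
    IsPathConnected {x : A | IsUnit x} := by
  refine ⟨1, isUnit_one, fun {b} hb => ?_⟩
  let line : ℂ → A := fun t => 1 + t • (b - 1)
  have hline : Continuous line := by fun_prop
  have hunits_on_line : IsPathConnected {t : ℂ | IsUnit (line t)} := by
    simpa only [compl_ofPred, not_not] using
      (finite_setOf_not_isUnit_add_smul isUnit_one (b - 1)).countable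
        |>.isPathConnected_compl_of_one_lt_rank (by simp [Complex.rank_real_complex])
  have hjoin := (hunits_on_line.image hline).joinedIn 1 ⟨0, by simp [line], by simp [line]⟩ b
    ⟨1, by simpa [line], by simp [line]⟩
  exact hjoin.mono (image_subset_iff.2 fun t ht => ht)

theorem range_exp_mem_nhds_one (𝕂 : Type*) {A : Type*} [RCLike 𝕂] [NormedRing A]
    [NormedAlgebra 𝕂 A] [CompleteSpace A] : range (exp : A → A) ∈ 𝓝 1 := by
  have hmap := (hasStrictFDerivAt_exp_zero (𝕂 := 𝕂) (𝔸 := A)).map_nhds_eq_of_equiv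
    (f' := ContinuousLinearEquiv.refl 𝕂 A)
  rw [exp_zero] at hmap
  exact hmap ▸ range_mem_map

theorem inv_mul_preimage_range_exp_mem_nhds (𝕂 : Type*) {A : Type*} [RCLike 𝕂] [NormedRing A]
    [NormedAlgebra 𝕂 A] [CompleteSpace A] (u : Aˣ) :
    ((↑u⁻¹ : A) * ·) ⁻¹' range exp ∈ 𝓝 (u : A) :=
  (continuous_const_mul _).continuousAt.preimage_mem_nhds (by simpa using range_exp_mem_nhds_one 𝕂)

section Commutative

variable {A : Type*} [NormedCommRing A] [NormedAlgebra ℚ A] [CompleteSpace A]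

theorem mem_range_exp_iff_of_inv_mul_mem (u : Aˣ) {y : A} (hy : (↑u⁻¹ : A) * y ∈ range exp) :
    y ∈ range exp ↔ (u : A) ∈ range exp := by
  obtain ⟨b, hb⟩ := hy
  have hy : y = u * exp b := by rw [hb, Units.mul_inv_cancel_left]
  constructor
  · rintro ⟨s, rfl⟩
    refine ⟨s - b, ?_⟩
    rw [sub_eq_add_neg, exp_add, hy, mul_assoc, ← exp_add, add_neg_cancel, exp_zero, mul_one]
  · rintro ⟨a, ha⟩
    exact ⟨a + b, by rw [exp_add, ha, hy]⟩

theorem isOpen_range_exp (𝕂 : Type*) [RCLike 𝕂] [NormedAlgebra 𝕂 A] :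
    IsOpen (range (exp : A → A)) := by
  refine isOpen_iff_mem_nhds.2 ?_
  rintro _ ⟨a, rfl⟩
  filter_upwards [inv_mul_preimage_range_exp_mem_nhds 𝕂 (isUnit_exp a).unit] with y hy
  exact (mem_range_exp_iff_of_inv_mul_mem (isUnit_exp a).unit hy).2 ⟨a, rfl⟩

theorem mem_range_exp_of_mem_closure (𝕂 : Type*) [RCLike 𝕂] [NormedAlgebra 𝕂 A]
    {x : A} (hx : IsUnit x) (hcl : x ∈ closure (range exp)) : x ∈ range exp := by
  obtain ⟨y, hy, hy_exp⟩ :=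
    mem_closure_iff_nhds.1 hcl _ (inv_mul_preimage_range_exp_mem_nhds 𝕂 hx.unit)
  exact (mem_range_exp_iff_of_inv_mul_mem hx.unit hy).1 hy_exp

theorem range_exp_eq_setOf_isUnit_of_isPreconnected (𝕂 : Type*) [RCLike 𝕂] [NormedAlgebra 𝕂 A]
    (h : IsPreconnected {x : A | IsUnit x}) : range exp = {x : A | IsUnit x} := by
  refine Subset.antisymm (range_subset_iff.2 isUnit_exp) ?_
  exact h.subset_of_closure_inter_subset (isOpen_range_exp 𝕂) ⟨1, isUnit_one, 0, exp_zero⟩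
    fun x ⟨hcl, hx⟩ => mem_range_exp_of_mem_closure 𝕂 hx hcl

end Commutative

theorem range_exp_eq_setOf_isUnit {A : Type*} [NormedCommRing A] [NormedAlgebra ℂ A]
    [FiniteDimensional ℂ A] : range (exp : A → A) = {x : A | IsUnit x} := by
  let : NormedAlgebra ℚ A := .restrictScalars ℚ ℂ A
  have : CompleteSpace A := FiniteDimensional.complete ℂ A
  exact range_exp_eq_setOf_isUnit_of_isPreconnected ℂ
    isPathConnected_setOf_isUnit.isConnected.isPreconnected

theorem exists_commuting_exp_eq {ι R : Type*} [NormedRing R] [NormedAlgebra ℂ R]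
    [FiniteDimensional ℂ R] (a : ι → R) (ha : ∀ i, IsUnit (a i))
    (hcomm : ∀ i j, Commute (a i) (a j)) :
    ∃ L : ι → R, (∀ i, exp (L i) = a i) ∧ ∀ i j, Commute (L i) (L j) := by
  let S := Algebra.adjoin ℂ (range a)
  have haS (i : ι) : a i ∈ S := Algebra.subset_adjoin ⟨i, rfl⟩
  have : IsMulCommutative S := Algebra.isMulCommutative_adjoin ℂ <| by
    rintro _ ⟨i, rfl⟩ _ ⟨j, rfl⟩
    exact hcomm i j
  let : NormedCommRing S := { SubringClass.toNormedRing S with mul_comm := mul_comm' }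
  have hlog (i : ι) : ∃ L : S, exp L = ⟨a i, haS i⟩ := by
    rw [← mem_range, range_exp_eq_setOf_isUnit]
    exact S.isUnit_of_isUnit_val (ha i)
  choose L hL using hlog
  have : CompleteSpace S := FiniteDimensional.complete ℂ S
  refine ⟨fun i => L i, fun i => ?_, fun i j => Commute.map (mul_comm' (L i) (L j)) S.val⟩
  have hval := map_exp_of_mem_ball (𝕂 := ℂ) S.val continuous_subtype_val (L i)
    ((expSeries_radius_eq_top ℂ S).symm ▸ edist_lt_top _ _)
  rw [hL i] at hval
  exact hval.symm

/-- For any collection of pairwise commuting invertible complex `n × n` matrices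
`A 1, …, A k`, there exist complex matrices `L 1, …, L k` such that `exp (L j) = A j`
for each `j` and the `L j` pairwise commute. -/
theorem commuting_matrix_logarithms (n k : ℕ)
    (A : Fin k → Matrix (Fin n) (Fin n) ℂ)
    (hinv : ∀ j, IsUnit (A j))
    (hcomm : ∀ i j, Commute (A i) (A j)) :
    ∃ L : Fin k → Matrix (Fin n) (Fin n) ℂ,
      (∀ j, NormedSpace.exp (L j) = A j) ∧ ∀ i j, Commute (L i) (L j) := by
  let : NormedRing (Matrix (Fin n) (Fin n) ℂ) := Matrix.linftyOpNormedRing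
  let : NormedAlgebra ℂ (Matrix (Fin n) (Fin n) ℂ) := Matrix.linftyOpNormedAlgebra
  exact exists_commuting_exp_eq A hinv hcomm
end

section
/- Let N be a nilpotent complex n×n matrix and λ a nonzero complex number. Then the matrix L := (log λ)·I − Σ_{m=1}^{n-1} (1/m)·(−N/λ)^m satisfies exp(L) = λI + N, where log λ is any fixed complex logarithm of λ. -/
/-!
Put `M = -λ⁻¹ N`, so that `λ I + N = λ (1 - M)` and `exp (l I) = λ I`. It remains to see that
`exp (-s(M)) = 1 - M` for the truncated Mercator polynomial `s = ∑_{i ≤ m} Xⁱ / i` whenever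
`M ^ (m + 1) = 0`, i.e. that `e(-s) ≡ 1 - X mod X ^ (m + 1)` for the truncated exponential `e`.
From `(1 - X) s' = 1 - X ^ m` and `e' ≡ e`, the difference `d = e(-s) - (1 - X)` satisfies
`(1 - X) d' + d ≡ 0 mod X ^ m` and `d(0) = 0`, and this recursion on coefficients forces
`d ≡ 0 mod X ^ (m + 1)`.
-/

open NormedSpace Polynomial

namespace Polynomial

variable {K : Type*} [Field K]

variable (K) in
/-- The degree-`m` truncation of `-log (1 - X)`. -/
noncomputable def mercator (m : ℕ) : K[X] :=
  ∑ i ∈ Finset.Icc 1 m, (i : K)⁻¹ • X ^ i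

theorem mercator_succ (m : ℕ) :
    mercator K (m + 1) = mercator K m + ((m + 1 : ℕ) : K)⁻¹ • X ^ (m + 1) :=
  Finset.sum_Icc_succ_top (by omega) _

theorem X_dvd_mercator (m : ℕ) : X ∣ mercator K m :=
  Finset.dvd_sum fun i hi =>
    dvd_smul_of_dvd _ (dvd_pow_self X (by have := (Finset.mem_Icc.mp hi).1; omega))

theorem one_sub_X_mul_derivative_mercator [CharZero K] (m : ℕ) :
    (1 - X) * derivative (mercator K m) = 1 - X ^ m := by
  induction m with
  | zero => simp [mercator]
  | succ m ih =>
    have hm : ((m + 1 : ℕ) : K) ≠ 0 := Nat.cast_ne_zero.mpr m.succ_ne_zero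
    rw [mercator_succ, derivative_add, derivative_smul, derivative_X_pow, Nat.add_sub_cancel,
      smul_eq_C_mul, ← mul_assoc, ← C_mul, inv_mul_cancel₀ hm, C_1, one_mul, mul_add, ih]
    ring

theorem coeff_one_sub_X_mul_derivative_add (d : K[X]) (j : ℕ) :
    ((1 - X) * derivative d + d).coeff j = (j + 1) * d.coeff (j + 1) - (j - 1) * d.coeff j := by
  have hX : (X * derivative d).coeff j = j * d.coeff j := by
    rcases j with _ | j
    · simp
    · rw [coeff_X_mul, coeff_derivative]; push_cast; ring
  rw [sub_mul, one_mul, coeff_add, coeff_sub, hX, coeff_derivative]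
  ring

theorem X_pow_succ_dvd_of_dvd_one_sub_X_mul_derivative_add [CharZero K] {d : K[X]}
    (hd : d.coeff 0 = 0) : ∀ {m : ℕ}, X ^ m ∣ (1 - X) * derivative d + d → X ^ (m + 1) ∣ d
  | 0, _ => X_pow_dvd_iff.mpr fun j hj => by rwa [Nat.lt_one_iff.mp hj]
  | m + 1, h => by
    have hlow := X_pow_dvd_iff.mp
      (X_pow_succ_dvd_of_dvd_one_sub_X_mul_derivative_add hd ((pow_dvd_pow X m.le_succ).trans h))
    have htop : d.coeff (m + 1) = 0 := by
      have := X_pow_dvd_iff.mp h m m.lt_succ_self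
      rw [coeff_one_sub_X_mul_derivative_add, hlow m m.lt_succ_self, mul_zero, sub_zero] at this
      exact (mul_eq_zero.mp this).resolve_left (Nat.cast_add_one_ne_zero m)
    refine X_pow_dvd_iff.mpr fun j hj => ?_
    rcases Nat.lt_succ_iff_lt_or_eq.mp hj with hj | rfl
    exacts [hlow j hj, htop]

theorem X_pow_succ_dvd_trunc_exp_comp_neg_mercator_sub [CharZero K] (m : ℕ) :
    X ^ (m + 1) ∣
      (PowerSeries.trunc (m + 1) (PowerSeries.exp K)).comp (-mercator K m) - (1 - X) := by
  set s := mercator K m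
  set e := (PowerSeries.trunc (m + 1) (PowerSeries.exp K)).comp (-s)
  set E := (PowerSeries.trunc m (PowerSeries.exp K)).comp (-s)
  set T := C (PowerSeries.coeff m (PowerSeries.exp K)) * (-s) ^ m
  have hsplit : e = E + T := by
    simp only [e, E, T, PowerSeries.trunc_succ, add_comp, monomial_comp]
  have hderiv : derivative e = -derivative s * E := by
    rw [derivative_comp, ← PowerSeries.trunc_derivative, PowerSeries.derivative_exp,
      derivative_neg]
  have hs0 : s.coeff 0 = 0 := X_dvd_iff.mp (X_dvd_mercator m)
  have he0 : e.coeff 0 = 1 := by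
    rw [coeff_zero_eq_eval_zero, eval_comp, eval_neg, ← coeff_zero_eq_eval_zero, hs0, neg_zero,
      ← coeff_zero_eq_eval_zero, PowerSeries.coeff_trunc, if_pos m.succ_pos,
      PowerSeries.coeff_exp]
    simp
  have hode : (1 - X) * derivative (e - (1 - X)) + (e - (1 - X)) = T + X ^ m * E := by
    rw [derivative_sub, derivative_sub, derivative_one, derivative_X, hderiv]
    linear_combination (-E) * one_sub_X_mul_derivative_mercator (K := K) m + hsplit
  refine X_pow_succ_dvd_of_dvd_one_sub_X_mul_derivative_add (by simp [he0]) ?_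
  rw [hode]
  exact dvd_add ((pow_dvd_pow_of_dvd (X_dvd_mercator m).neg_right m).mul_left _)
    (dvd_mul_right _ _)

theorem aeval_eq_of_X_pow_dvd_sub {R A : Type*} [CommRing R] [Ring A] [Algebra R A]
    {p q : R[X]} {x : A} {k : ℕ} (h : X ^ k ∣ p - q) (hx : x ^ k = 0) :
    aeval x p = aeval x q := by
  obtain ⟨r, hr⟩ := h
  rw [← sub_eq_zero, ← map_sub, hr, map_mul, map_pow, aeval_X, hx, zero_mul]

end Polynomial

section TopologicalAlgebra

variable (𝕂 : Type*) {𝔸 : Type*} [Field 𝕂] [CharZero 𝕂] [Ring 𝔸] [Algebra 𝕂 𝔸]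
  [TopologicalSpace 𝔸] [IsTopologicalRing 𝔸]

open scoped Nat in
theorem NormedSpace.exp_eq_sum_range_of_pow_eq_zero {a : 𝔸} {k : ℕ} (ha : a ^ k = 0) :
    exp a = ∑ i ∈ Finset.range k, (i ! : 𝕂)⁻¹ • a ^ i := by
  rw [exp_eq_tsum 𝕂]
  refine tsum_eq_sum fun i hi => ?_
  rw [pow_eq_zero_of_le (by simpa using hi) ha, smul_zero]

theorem NormedSpace.exp_eq_aeval_trunc_exp {a : 𝔸} {k : ℕ} (ha : a ^ k = 0) :
    exp a = aeval a (PowerSeries.trunc k (PowerSeries.exp 𝕂)) := by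
  rw [exp_eq_sum_range_of_pow_eq_zero 𝕂 ha, aeval_def, PowerSeries.eval₂_trunc_eq_sum_range]
  simp [Algebra.smul_def]

theorem NormedSpace.exp_neg_aeval_mercator {x : 𝔸} {m : ℕ} (hx : x ^ (m + 1) = 0) :
    exp (-aeval x (mercator 𝕂 m)) = 1 - x := by
  have hnil : (-aeval x (mercator 𝕂 m)) ^ (m + 1) = 0 := by
    have hdvd : X ^ (m + 1) ∣ (-mercator 𝕂 m) ^ (m + 1) - 0 := by
      rw [sub_zero]
      exact pow_dvd_pow_of_dvd (X_dvd_mercator m).neg_right _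
    rw [← map_neg, ← map_pow, aeval_eq_of_X_pow_dvd_sub hdvd hx, map_zero]
  rw [exp_eq_aeval_trunc_exp 𝕂 hnil, ← map_neg, ← aeval_comp,
    aeval_eq_of_X_pow_dvd_sub (X_pow_succ_dvd_trunc_exp_comp_neg_mercator_sub m) hx]
  simp

end TopologicalAlgebra

theorem Matrix.exp_smul_one {m 𝔸 : Type*} [Fintype m] [DecidableEq m] [NormedRing 𝔸]
    [NormedAlgebra ℚ 𝔸] [CompleteSpace 𝔸] (a : 𝔸) :
    exp (a • (1 : Matrix m m 𝔸)) = exp a • 1 := by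
  rw [smul_one_eq_diagonal, exp_diagonal, Pi.exp_def, smul_one_eq_diagonal]

theorem exp_mercator_log_jordan_general (n : ℕ) (N : Matrix (Fin n) (Fin n) ℂ)
    (hN : N ^ n = 0) (lam l : ℂ) (hl : Complex.exp l = lam) :
    NormedSpace.exp
        (l • (1 : Matrix (Fin n) (Fin n) ℂ) -
          ∑ m ∈ Finset.Icc 1 (n - 1), ((m : ℂ)⁻¹) • ((-lam⁻¹) • N) ^ m)
      = lam • (1 : Matrix (Fin n) (Fin n) ℂ) + N := by
  set M := (-lam⁻¹) • N
  have hM : M ^ (n - 1 + 1) = 0 := by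
    rw [_root_.smul_pow, pow_eq_zero_of_le (by omega) hN, smul_zero]
  have hlog :
      ∑ m ∈ Finset.Icc 1 (n - 1), (m : ℂ)⁻¹ • M ^ m = aeval M (mercator ℂ (n - 1)) := by
    simp [mercator, map_sum]
  have hlam : lam ≠ 0 := hl ▸ Complex.exp_ne_zero l
  rw [hlog, sub_eq_add_neg, Matrix.exp_add_of_commute _ _ ((Commute.one_left _).smul_left l),
    Matrix.exp_smul_one, exp_neg_aeval_mercator ℂ hM, ← Complex.exp_eq_exp_ℂ, hl,
    smul_one_mul, smul_sub, smul_smul, mul_neg, mul_inv_cancel₀ hlam, neg_one_smul,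
    sub_neg_eq_add]

/-- If `N` is a nilpotent complex `n × n` matrix (so `N ^ n = 0`) and `λ ≠ 0`, then
for any complex logarithm `l` of `λ` (i.e. `exp l = λ`), the matrix
`L = l • I − Σ_{m=1}^{n-1} (1/m) • (−λ⁻¹ • N)^m` satisfies `exp L = λ • I + N`. -/
theorem exp_mercator_log_jordan (n : ℕ) (N : Matrix (Fin n) (Fin n) ℂ)
    (hN : N ^ n = 0) (lam l : ℂ) (hlam : lam ≠ 0) (hl : Complex.exp l = lam) :
    NormedSpace.exp
        (l • (1 : Matrix (Fin n) (Fin n) ℂ) -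
          ∑ m ∈ Finset.Icc 1 (n - 1), ((m : ℂ)⁻¹) • ((-lam⁻¹) • N) ^ m)
      = lam • (1 : Matrix (Fin n) (Fin n) ℂ) + N :=
  exp_mercator_log_jordan_general n N hN lam l hl
end

section
/- Suppose 1, ω₁, ..., ω_d ∈ ℝ form a ℚ-basis of a real algebraic number field Φ of degree d+1 over ℚ. Then the vector ω = (ω₁, ..., ω_d) is badly approximable: there exists K > 0 such that ‖m·ω‖ ≥ K/|m|^d for all nonzero m ∈ ℤ^d. -/
/-!
Write `x = m·ω - p` and let `α = -p + Σ mᵢ ωᵢ ∈ Φ`, an integer combination of the basis, so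
`α ≠ 0`. After multiplying by a fixed common denominator `D`, `Dα` is a nonzero algebraic
integer, so its norm, the product of its `d + 1` conjugates, has absolute value at least `1`.
The real conjugate is `D x`; each of the other `d` conjugates is `O(|m|)` once `|x| < 1`, since
then `|p| = O(|m|)`. Hence `1 ≤ const · |x| · |m|^d`.
-/

open Finset

namespace NumberField

variable {K : Type*} [Field K] [NumberField K]

lemma one_le_norm_mul_house_pow_of_isIntegral {β : K} (hβ : IsIntegral ℤ β) (hβ0 : β ≠ 0)
    (σ : K →+* ℂ) : 1 ≤ ‖σ β‖ * house β ^ (Module.finrank ℚ K - 1) := by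
  let a : 𝓞 K := ⟨β, hβ⟩
  have ha : a ≠ 0 := fun h => hβ0 (congrArg ((↑) : 𝓞 K → K) h)
  calc (1 : ℝ) ≤ |((Algebra.norm ℤ a : ℤ) : ℝ)| := by
        exact_mod_cast Int.one_le_abs (Algebra.norm_ne_zero_iff.mpr ha)
    _ = ‖Algebra.norm ℚ β‖ := by
        rw [← show (Algebra.norm ℤ a : ℚ) = Algebra.norm ℚ β from Algebra.coe_norm_int a]
        simp [Int.norm_eq_abs]
    _ ≤ ‖σ β‖ * house β ^ (Module.finrank ℚ K - 1) := norm_norm_le_norm_mul_house_pow β σ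

lemma house_zsmul_le (c : ℤ) (α : K) : house (c • α) ≤ |(c : ℝ)| * house α := by
  simpa [zsmul_eq_mul] using house_mul_le (c : K) α

lemma house_sum_zsmul_le {ι : Type*} [Fintype ι] (b : ι → K) (c : ι → ℤ) :
    house (∑ j, c j • b j) ≤ (∑ j, |(c j : ℝ)|) * ∑ j, house (b j) := by
  rw [sum_mul]
  refine (house_sum_le_sum_house _ _).trans (sum_le_sum fun j _ => (house_zsmul_le _ _).trans ?_)
  gcongr
  exact single_le_sum (fun j _ => house_nonneg (b j)) (mem_univ j)

theorem exists_one_le_mul_norm_sum_zsmul_mul_pow {ι : Type*} [Fintype ι] (b : ι → K) :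
    ∃ A > (0 : ℝ), ∀ c : ι → ℤ, ∑ j, c j • b j ≠ 0 → ∀ σ : K →+* ℂ,
      1 ≤ A * ‖σ (∑ j, c j • b j)‖ * (∑ j, |(c j : ℝ)|) ^ (Module.finrank ℚ K - 1) := by
  classical
  obtain ⟨D, hD0, hDint⟩ := exists_integral_multiples ℤ ℚ (univ.image b)
  set n := Module.finrank ℚ K - 1
  -- the `+ 1` keeps `A` positive even when every `b j` vanishes
  set H := ∑ j, house (b j) + 1
  have hD : 0 < |(D : ℝ)| := abs_pos.mpr (Int.cast_ne_zero.mpr hD0)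
  have hH : 0 < H :=
    add_pos_of_nonneg_of_pos (sum_nonneg fun j _ => house_nonneg (b j)) one_pos
  refine ⟨|(D : ℝ)| * (|(D : ℝ)| * H) ^ n, by positivity, fun c hc σ => ?_⟩
  set α := ∑ j, c j • b j
  have hβ : IsIntegral ℤ (D • α) := by
    simp only [α, smul_sum, smul_comm D]
    exact IsIntegral.sum _ fun j _ => (hDint _ (mem_image_of_mem b (mem_univ j))).zsmul _
  have hσ : ‖σ (D • α)‖ = |(D : ℝ)| * ‖σ α‖ := by simp [zsmul_eq_mul]
  have hhouse : house (D • α) ≤ |(D : ℝ)| * ((∑ j, |(c j : ℝ)|) * H) := by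
    refine (house_zsmul_le _ _).trans ?_
    gcongr
    exact (house_sum_zsmul_le b c).trans (by gcongr; linarith)
  calc 1 ≤ ‖σ (D • α)‖ * house (D • α) ^ n :=
        one_le_norm_mul_house_pow_of_isIntegral hβ (smul_ne_zero hD0 hc) σ
    _ ≤ (|(D : ℝ)| * ‖σ α‖) * (|(D : ℝ)| * ((∑ j, |(c j : ℝ)|) * H)) ^ n := by
        rw [hσ]
        gcongr
        exact house_nonneg _
    _ = _ := by rw [mul_pow, mul_pow, mul_pow]; ring

end NumberField

lemma abs_le_sqrt_sum_sq {ι : Type*} [Fintype ι] (v : ι → ℝ) (i : ι) :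
    |v i| ≤ √(∑ j, v j ^ 2) :=
  Real.abs_le_sqrt (single_le_sum (fun j _ => sq_nonneg (v j)) (mem_univ i))

lemma one_le_sqrt_sum_sq_intCast {ι : Type*} [Fintype ι] {m : ι → ℤ} (hm : m ≠ 0) :
    1 ≤ √(∑ j, (m j : ℝ) ^ 2) := by
  obtain ⟨i, hi⟩ := Function.ne_iff.mp hm
  calc (1 : ℝ) ≤ |(m i : ℝ)| := by exact_mod_cast Int.one_le_abs hi
    _ ≤ √(∑ j, (m j : ℝ) ^ 2) := abs_le_sqrt_sum_sq (fun j => (m j : ℝ)) i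

lemma abs_sum_mul_le {ι : Type*} [Fintype ι] (v w : ι → ℝ) :
    |∑ i, v i * w i| ≤ (∑ i, |w i|) * √(∑ i, v i ^ 2) := by
  rw [sum_mul]
  refine (abs_sum_le_sum_abs _ _).trans (sum_le_sum fun i _ => ?_)
  rw [abs_mul, mul_comm]
  exact mul_le_mul_of_nonneg_left (abs_le_sqrt_sum_sq v i) (abs_nonneg _)

lemma sum_abs_cons_le {d : ℕ} (ω : Fin d → ℝ) {m : Fin d → ℤ} (hm : m ≠ 0) (p : ℤ)
    (hx : |∑ i, (m i : ℝ) * ω i - p| < 1) :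
    ∑ j, |((Fin.cons (-p) m : Fin (d + 1) → ℤ) j : ℝ)|
      ≤ (1 + ∑ i, |ω i| + d) * √(∑ i, (m i : ℝ) ^ 2) := by
  set N := √(∑ i, (m i : ℝ) ^ 2)
  have hN : 1 ≤ N := one_le_sqrt_sum_sq_intCast hm
  have hp : |(p : ℝ)| ≤ 1 + (∑ i, |ω i|) * N := by
    have h1 : |∑ i, (m i : ℝ) * ω i| ≤ (∑ i, |ω i|) * N := abs_sum_mul_le _ ω
    have h2 := abs_sub_abs_le_abs_sub (p : ℝ) (∑ i, (m i : ℝ) * ω i)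
    rw [abs_sub_comm] at h2
    linarith
  have hm' : ∑ i, |(m i : ℝ)| ≤ d * N := by
    refine (sum_le_sum fun i _ => abs_le_sqrt_sum_sq (fun j => (m j : ℝ)) i).trans_eq ?_
    simp [N]
  have hW : 0 ≤ ∑ i, |ω i| := sum_nonneg fun i _ => abs_nonneg _
  rw [Fin.sum_univ_succ]
  simp only [Fin.cons_zero, Fin.cons_succ, Int.cast_neg, abs_neg]
  nlinarith

lemma coe_sum_cons_zsmul {d : ℕ} {ω : Fin d → ℝ} {Φ : Subfield ℝ} {v : Fin (d + 1) → Φ}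
    (hv : ∀ i, (v i : ℝ) = (Fin.cons (1 : ℝ) ω : Fin (d + 1) → ℝ) i) (m : Fin d → ℤ) (p : ℤ) :
    ((∑ j, (Fin.cons (-p) m : Fin (d + 1) → ℤ) j • v j : Φ) : ℝ) = ∑ i, (m i : ℝ) * ω i - p := by
  simp [Fin.sum_univ_succ, hv, zsmul_eq_mul]
  ring

lemma sum_cons_zsmul_ne_zero {d : ℕ} {M : Type*} [AddCommGroup M] [Module ℚ M]
    {v : Fin (d + 1) → M} (hv : LinearIndependent ℚ v) {m : Fin d → ℤ} (hm : m ≠ 0) (p : ℤ) :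
    ∑ j, (Fin.cons (-p) m : Fin (d + 1) → ℤ) j • v j ≠ 0 := fun h =>
  hm (funext fun i => by
    simpa using Fintype.linearIndependent_iff.mp (hv.restrict_scalars' ℤ) _ h i.succ)

theorem perron_badly_approximable_general (d : ℕ) (ω : Fin d → ℝ)
    (Φ : Subfield ℝ)
    (b : Module.Basis (Fin (d + 1)) ℚ Φ)
    (hb : ∀ i : Fin (d + 1), (b i : ℝ) = (Fin.cons (1 : ℝ) ω : Fin (d + 1) → ℝ) i) :
    ∃ K > (0 : ℝ), ∀ m : Fin d → ℤ, m ≠ 0 → ∀ p : ℤ,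
      K / (Real.sqrt (∑ i, ((m i : ℝ)) ^ 2)) ^ d ≤ |(∑ i, (m i : ℝ) * ω i) - (p : ℝ)| := by
  have : NumberField Φ := { to_finiteDimensional := Module.Finite.of_basis b }
  have hn : Module.finrank ℚ Φ - 1 = d := by simp [Module.finrank_eq_card_basis b]
  obtain ⟨A, hA, hliouville⟩ := NumberField.exists_one_le_mul_norm_sum_zsmul_mul_pow (K := Φ) b
  set C := 1 + ∑ i, |ω i| + d
  have hC : 0 < C := by positivity
  refine ⟨min 1 (1 / (A * C ^ d)), by positivity, fun m hm p => ?_⟩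
  set N := √(∑ i, (m i : ℝ) ^ 2)
  set x := ∑ i, (m i : ℝ) * ω i - p
  have hN : 1 ≤ N := one_le_sqrt_sum_sq_intCast hm
  rcases le_or_gt 1 |x| with hx | hx
  · calc min 1 (1 / (A * C ^ d)) / N ^ d ≤ 1 / 1 :=
          div_le_div₀ zero_le_one (min_le_left _ _) zero_lt_one (one_le_pow₀ hN)
      _ ≤ |x| := by simpa using hx
  have key := hliouville _ (sum_cons_zsmul_ne_zero b.linearIndependent hm p)
    (Complex.ofRealHom.comp Φ.subtype)
  rw [RingHom.comp_apply, Subfield.subtype_apply, coe_sum_cons_zsmul hb,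
    Complex.ofRealHom_eq_coe, Complex.norm_real, Real.norm_eq_abs, hn] at key
  calc min 1 (1 / (A * C ^ d)) / N ^ d ≤ 1 / (A * C ^ d) / N ^ d := by
        gcongr; exact min_le_right _ _
    _ = 1 / (A * (C * N) ^ d) := by rw [mul_pow, div_div, mul_assoc]
    _ ≤ |x| := by
      rw [div_le_iff₀ (by positivity)]
      calc 1 ≤ A * |x| * (∑ j, |((Fin.cons (-p) m : Fin (d + 1) → ℤ) j : ℝ)|) ^ d := key
        _ ≤ A * |x| * (C * N) ^ d := by gcongr; exact sum_abs_cons_le ω hm p hx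
        _ = |x| * (A * (C * N) ^ d) := by ring

/-- Perron's theorem: if `1, ω 1, …, ω d` form a `ℚ`-basis of a real algebraic number
field `Φ ⊆ ℝ` of degree `d + 1` over `ℚ`, then `ω` is badly approximable: there is
`K > 0` such that `|m·ω − p| ≥ K / |m|^d` for every nonzero `m ∈ ℤ^d` and every
integer `p`. -/
theorem perron_badly_approximable (d : ℕ) (ω : Fin d → ℝ)
    (Φ : Subfield ℝ) [FiniteDimensional ℚ Φ]
    (hdeg : Module.finrank ℚ Φ = d + 1)
    (b : Module.Basis (Fin (d + 1)) ℚ Φ)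
    (hb : ∀ i : Fin (d + 1), (b i : ℝ) = (Fin.cons (1 : ℝ) ω : Fin (d + 1) → ℝ) i) :
    ∃ K > (0 : ℝ), ∀ m : Fin d → ℤ, m ≠ 0 → ∀ p : ℤ,
      K / (Real.sqrt (∑ i, ((m i : ℝ)) ^ 2)) ^ d ≤ |(∑ i, (m i : ℝ) * ω i) - (p : ℝ)| :=
  perron_badly_approximable_general d ω Φ b hb
end

section
/- Let ω₁ be a root of f(x) = x³ − 7x² + 14x − 7 and let ε₁ = 2 − 4ω₁ + ω₁² and ε₂ = −5 + 5ω₁ − ω₁². Then ε₁ and ε₂ are units in the ring ℤ[ω₁], i.e., they have multiplicative inverses in ℤ[ω₁]. -/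
/-! Both inverses are polynomials in `ω₁`, read off from Bézout identities with
`f = X³ - 7X² + 14X - 7`: `(2 - 4X + X²)(X - 3) = f + 1` and
`(-5 + 5X - X²)(-3 + 4X - X²) = (X - 2) f + 1`. -/

open Polynomial

section CubicUnits

variable {S : Type*} [CommRing S] {x : S}

theorem mul_sub_three_eq_one_of_cubic (hx : x ^ 3 - 7 * x ^ 2 + 14 * x - 7 = 0) :
    (2 - 4 * x + x ^ 2) * (x - 3) = 1 := by
  linear_combination hx

theorem mul_quadratic_eq_one_of_cubic (hx : x ^ 3 - 7 * x ^ 2 + 14 * x - 7 = 0) :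
    (-5 + 5 * x - x ^ 2) * (-3 + 4 * x - x ^ 2) = 1 := by
  linear_combination (x - 2) * hx

end CubicUnits

/-- If `ω₁` is a real root of `f(x) = x³ − 7x² + 14x − 7`, then
`ε₁ = 2 − 4ω₁ + ω₁²` and `ε₂ = −5 + 5ω₁ − ω₁²` are units of the ring `ℤ[ω₁]`:
they have multiplicative inverses in `ℤ[ω₁]`. -/
theorem units_in_Z_omega (ω₁ : ℝ) (hω : ω₁ ^ 3 - 7 * ω₁ ^ 2 + 14 * ω₁ - 7 = 0) :
    (2 - 4 * ω₁ + ω₁ ^ 2 ∈ Algebra.adjoin ℤ ({ω₁} : Set ℝ)) ∧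
    (-5 + 5 * ω₁ - ω₁ ^ 2 ∈ Algebra.adjoin ℤ ({ω₁} : Set ℝ)) ∧
    (∃ b ∈ Algebra.adjoin ℤ ({ω₁} : Set ℝ), (2 - 4 * ω₁ + ω₁ ^ 2) * b = 1) ∧
    (∃ b ∈ Algebra.adjoin ℤ ({ω₁} : Set ℝ), (-5 + 5 * ω₁ - ω₁ ^ 2) * b = 1) := by
  have mem (p : ℤ[X]) : aeval ω₁ p ∈ Algebra.adjoin ℤ ({ω₁} : Set ℝ) :=
    aeval_mem_adjoin_singleton ℤ ω₁
  have hε₁ := mem (2 - 4 * X + X ^ 2)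
  have hε₂ := mem (-5 + 5 * X - X ^ 2)
  have hε₁_inv := mem (X - 3)
  have hε₂_inv := mem (-3 + 4 * X - X ^ 2)
  simp only [aeval_add, aeval_sub, aeval_neg, map_mul, map_pow, map_ofNat, aeval_X]
    at hε₁ hε₂ hε₁_inv hε₂_inv
  exact ⟨hε₁, hε₂, ⟨_, hε₁_inv, mul_sub_three_eq_one_of_cubic hω⟩,
    ⟨_, hε₂_inv, mul_quadratic_eq_one_of_cubic hω⟩⟩
end

section
/- Let R ⊂ ℝ^d be a bounded convex set and let v, v' ∈ ℝ^d. Then the volume of the symmetric difference of the translates R − v and R − v' is bounded by a constant (depending only on R and d) times |v − v'|, where |·| is the Euclidean norm. Consequently the map v ↦ vol(R ∩ (R − v)) is Lipschitz continuous. -/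
/-!
If a ball `B(p, r)` lies in the convex set `R`, then by convexity the image of `R` under the
homothety of centre `p` and ratio `1 - t` lies in `R ∩ (R - w)` whenever `‖w‖ ≤ t r`. Hence
`vol (R \ (R - w)) ≤ (1 - (1 - t) ^ d) vol R ≤ d t vol R` for `t = ‖w‖ / r`, and the symmetric
difference of `R - v` and `R - v'` is the union of two translates of such sets. A convex set with
empty interior is null. The Lipschitz bound then follows from `|vol A - vol B| ≤ vol (A ∆ B)`.
-/

open MeasureTheory Measure Set Metric AffineMap Module
open scoped symmDiff NNReal

lemma Set.image_sub_const_eq_preimage_add_const {G : Type*} [AddGroup G] (s : Set G) (v : G) :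
    (· - v) '' s = (· + v) ⁻¹' s :=
  congrFun (image_eq_preimage_of_inverse (fun x => sub_add_cancel x v)
    (fun x => add_sub_cancel_right x v)) s

lemma Set.image_sub_const_sdiff_image_sub_const {G : Type*} [AddCommGroup G] (s : Set G)
    (v v' : G) : (· - v) '' s \ (· - v') '' s = (· - v) '' (s \ (· - (v' - v)) '' s) := by
  rw [image_sdiff sub_left_injective, image_image]
  simp only [sub_sub, sub_add_cancel]

lemma MeasureTheory.measure_image_sub_const {G : Type*} [AddGroup G] [MeasurableSpace G]
    [MeasurableAdd G] (μ : Measure G) [μ.IsAddRightInvariant] (s : Set G) (v : G) :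
    μ ((· - v) '' s) = μ s := by
  rw [image_sub_const_eq_preimage_add_const, measure_preimage_add_right]

variable {E : Type*} [NormedAddCommGroup E] [NormedSpace ℝ E] {s : Set E}

lemma Convex.image_sub_const (hs : Convex ℝ s) (v : E) : Convex ℝ ((· - v) '' s) := by
  rw [image_sub_const_eq_preimage_add_const]
  exact hs.translate_preimage_left v

lemma Convex.image_homothety_subset (hs : Convex ℝ s) {p : E} (hp : p ∈ s) {c : ℝ}
    (hc : c ∈ Icc 0 1) : homothety p c '' s ⊆ s := by
  rintro _ ⟨x, hx, rfl⟩
  rw [homothety_eq_lineMap]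
  exact hs.lineMap_mem hp hx hc

lemma Convex.image_homothety_subset_image_sub (hs : Convex ℝ s) {p : E} {r t : ℝ}
    (hball : closedBall p r ⊆ s) (ht : t ∈ Icc 0 1) {w : E} (hw : ‖w‖ ≤ t * r) :
    homothety p (1 - t) '' s ⊆ (· - w) '' s := by
  rintro _ ⟨x, hx, rfl⟩
  rw [image_sub_const_eq_preimage_add_const, mem_preimage]
  rcases ht.1.eq_or_lt with rfl | htpos
  · obtain rfl : w = 0 := norm_le_zero_iff.1 (by simpa using hw)
    simpa using hx
  have hq : p + t⁻¹ • w ∈ closedBall p r := by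
    rw [mem_closedBall, dist_eq_norm, add_sub_cancel_left, norm_smul, norm_inv,
      Real.norm_of_nonneg htpos.le, inv_mul_le_iff₀ htpos]
    exact hw
  have hline : homothety p (1 - t) x + w = lineMap (p + t⁻¹ • w) x (1 - t) := by
    rw [homothety_apply, lineMap_apply, vsub_eq_sub, vadd_eq_add, vsub_eq_sub, vadd_eq_add]
    conv_lhs => rw [← smul_inv_smul₀ htpos.ne' w]
    module
  rw [hline]
  exact hs.lineMap_mem (hball hq) hx ⟨by linarith [ht.2], by linarith⟩

variable [MeasurableSpace E] [BorelSpace E] [FiniteDimensional ℝ E] (μ : Measure E)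
  [μ.IsAddHaarMeasure]

lemma Convex.measureReal_sdiff_image_homothety (hs : Convex ℝ s) (hfin : μ s ≠ ⊤) {p : E}
    (hp : p ∈ s) {c : ℝ} (hc : c ∈ Icc 0 1) :
    μ.real (s \ homothety p c '' s) = (1 - c ^ finrank ℝ E) * μ.real s := by
  have hsub := hs.image_homothety_subset hp hc
  rw [measureReal_def, measure_sdiff hsub ((hs.affine_image _).nullMeasurableSet μ)
    (ne_top_of_le_ne_top hfin (measure_mono hsub)), addHaar_image_homothety,
    ENNReal.toReal_sub_of_le (by rw [← addHaar_image_homothety]; exact measure_mono hsub) hfin,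
    ENNReal.toReal_mul, ENNReal.toReal_ofReal (abs_nonneg _), abs_of_nonneg (pow_nonneg hc.1 _)]
  rw [measureReal_def]; ring

lemma Convex.measureReal_sdiff_image_sub_le (hs : Convex ℝ s) (hfin : μ s ≠ ⊤) {p : E} {r : ℝ}
    (hr : 0 < r) (hball : closedBall p r ⊆ s) (w : E) :
    μ.real (s \ (· - w) '' s) ≤ (finrank ℝ E + 1) / r * μ.real s * ‖w‖ := by
  rcases le_or_gt r ‖w‖ with hrw | hwr
  · have h1 : 1 ≤ (finrank ℝ E + 1) / r * ‖w‖ := by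
      rw [div_mul_eq_mul_div, le_div_iff₀ hr]
      nlinarith [norm_nonneg w, (finrank ℝ E).cast_nonneg (α := ℝ)]
    calc μ.real (s \ (· - w) '' s) ≤ μ.real s := measureReal_mono sdiff_subset hfin
      _ ≤ (finrank ℝ E + 1) / r * ‖w‖ * μ.real s :=
          le_mul_of_one_le_left measureReal_nonneg h1
      _ = _ := by ring
  · set t := ‖w‖ / r
    have ht : t ∈ Icc 0 1 := ⟨by positivity, (div_lt_one hr).2 hwr |>.le⟩
    have hsub := hs.image_homothety_subset_image_sub hball ht
      (by rw [div_mul_cancel₀ _ hr.ne'])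
    have hbern : 1 - (finrank ℝ E : ℝ) * t ≤ (1 - t) ^ finrank ℝ E := by
      simpa [sub_eq_add_neg] using
        one_add_mul_le_pow (a := -t) (by linarith [ht.2]) (finrank ℝ E)
    calc μ.real (s \ (· - w) '' s) ≤ μ.real (s \ homothety p (1 - t) '' s) :=
          measureReal_mono (sdiff_subset_sdiff_right hsub)
            (measure_ne_top_of_subset sdiff_subset hfin)
      _ = (1 - (1 - t) ^ finrank ℝ E) * μ.real s :=
          hs.measureReal_sdiff_image_homothety μ hfin (hball (mem_closedBall_self hr.le))
            ⟨by linarith [ht.2], by linarith [ht.1]⟩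
      _ ≤ (finrank ℝ E + 1) * t * μ.real s := by
          gcongr
          nlinarith [ht.1]
      _ = _ := by ring

lemma Convex.measure_eq_zero_of_interior_eq_empty (hs : Convex ℝ s) (h : interior s = ∅) :
    μ s = 0 :=
  measure_mono_null (by rw [frontier, h, sdiff_empty]; exact subset_closure)
    (hs.addHaar_frontier μ)

lemma Convex.exists_measureReal_sdiff_image_sub_le (hs : Convex ℝ s) (hfin : μ s ≠ ⊤) :
    ∃ C > 0, ∀ w : E, μ.real (s \ (· - w) '' s) ≤ C * ‖w‖ := by
  rcases (interior s).eq_empty_or_nonempty with hint | ⟨p, hp⟩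
  · refine ⟨1, one_pos, fun w => ?_⟩
    calc μ.real (s \ (· - w) '' s) ≤ μ.real s := measureReal_mono sdiff_subset hfin
      _ = 0 := (measureReal_eq_zero_iff hfin).2 (hs.measure_eq_zero_of_interior_eq_empty μ hint)
      _ ≤ 1 * ‖w‖ := by positivity
  · obtain ⟨r, hr, hball⟩ := nhds_basis_closedBall.mem_iff.1 (mem_interior_iff_mem_nhds.1 hp)
    have hpos : 0 < μ.real s := ENNReal.toReal_pos
      ((measure_closedBall_pos μ p hr).trans_le (measure_mono hball)).ne' hfin
    exact ⟨(finrank ℝ E + 1) / r * μ.real s, by positivity,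
      hs.measureReal_sdiff_image_sub_le μ hfin hr hball⟩

lemma Convex.exists_measureReal_symmDiff_image_sub_le (hs : Convex ℝ s) (hfin : μ s ≠ ⊤) :
    ∃ C > 0, ∀ v v' : E, μ.real (((· - v) '' s) ∆ ((· - v') '' s)) ≤ C * ‖v - v'‖ := by
  obtain ⟨C, hC, hsdiff⟩ := hs.exists_measureReal_sdiff_image_sub_le μ hfin
  refine ⟨2 * C, by positivity, fun v v' => ?_⟩
  calc μ.real (((· - v) '' s) ∆ ((· - v') '' s))
      ≤ μ.real ((· - v) '' s \ (· - v') '' s) + μ.real ((· - v') '' s \ (· - v) '' s) :=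
        measureReal_union_le _ _
    _ = μ.real (s \ (· - (v' - v)) '' s) + μ.real (s \ (· - (v - v')) '' s) := by
        simp only [measureReal_def, image_sub_const_sdiff_image_sub_const,
          measure_image_sub_const]
    _ ≤ C * ‖v' - v‖ + C * ‖v - v'‖ := add_le_add (hsdiff _) (hsdiff _)
    _ = 2 * C * ‖v - v'‖ := by rw [norm_sub_rev]; ring

lemma Convex.lipschitzWith_measureReal_inter_image_sub (hs : Convex ℝ s) (hfin : μ s ≠ ⊤)
    {C : ℝ≥0} (hC : ∀ v v' : E, μ.real (((· - v) '' s) ∆ ((· - v') '' s)) ≤ C * ‖v - v'‖) :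
    LipschitzWith C fun v : E => μ.real (s ∩ (· - v) '' s) := by
  refine LipschitzWith.of_dist_le_mul fun v v' => ?_
  calc dist (μ.real (s ∩ (· - v) '' s)) (μ.real (s ∩ (· - v') '' s))
      ≤ μ.real ((s ∩ (· - v) '' s) ∆ (s ∩ (· - v') '' s)) :=
        abs_measureReal_sub_le_measureReal_symmDiff'
          ((hs.inter (hs.image_sub_const v)).nullMeasurableSet μ)
          ((hs.inter (hs.image_sub_const v')).nullMeasurableSet μ)
          (measure_ne_top_of_subset inter_subset_left hfin)
          (measure_ne_top_of_subset inter_subset_left hfin)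
    _ ≤ μ.real (((· - v) '' s) ∆ ((· - v') '' s)) := by
        rw [← inter_symmDiff_distrib_left]
        refine measureReal_mono inter_subset_right ?_
        exact measure_symmDiff_ne_top (by rwa [measure_image_sub_const])
          (by rwa [measure_image_sub_const])
    _ ≤ C * dist v v' := by rw [dist_eq_norm]; exact hC v v'

/-- If `R ⊂ ℝ^d` is a bounded convex set, then the volume of the symmetric difference of
the translates `R − v` and `R − v'` is at most a constant (depending only on `R` and `d`)
times `|v − v'|`; consequently `v ↦ vol (R ∩ (R − v))` is Lipschitz continuous. -/
theorem translate_symmDiff_volume_lipschitz (d : ℕ) (R : Set (EuclideanSpace ℝ (Fin d)))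
    (hconv : Convex ℝ R) (hbdd : Bornology.IsBounded R) :
    (∃ C > (0 : ℝ), ∀ v v' : EuclideanSpace ℝ (Fin d),
        (volume (symmDiff ((fun x => x - v) '' R) ((fun x => x - v') '' R))).toReal ≤
          C * ‖v - v'‖) ∧
      ∃ C : NNReal, LipschitzWith C
        (fun v : EuclideanSpace ℝ (Fin d) =>
          (volume (R ∩ ((fun x => x - v) '' R))).toReal) := by
  have hfin : volume R ≠ ⊤ := hbdd.measure_lt_top.ne
  obtain ⟨C, hC, hsymm⟩ := hconv.exists_measureReal_symmDiff_image_sub_le volume hfin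
  refine ⟨⟨C, hC, hsymm⟩, C.toNNReal, ?_⟩
  exact hconv.lipschitzWith_measureReal_inter_image_sub volume hfin fun v v' =>
    (hsymm v v').trans_eq (by rw [Real.coe_toNNReal _ hC.le])
end

section
/- Let L be a complex n×n matrix such that for each standard basis vector e_i, the function t ↦ |exp((log t)(L − I)) e_i| is bounded above and below by positive constants for all t ≥ 1. Then every eigenvalue of L − I has nonpositive real part, and at least one eigenvalue of L − I is purely imaginary (has real part zero). -/
/-!
Write `A = L - 1` and `s = log t`; the hypothesis bounds the columns of `exp (s • A)`, hence its
Frobenius norm, above and below for `s ≥ 0`.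

For an eigenvalue `μ` of `A`, `exp (s μ)` is a spectral value of `exp (s • A)`, so `exp (s Re μ)`
stays bounded and `Re μ ≤ 0`.

Since `exp A` lies in the finite-dimensional, hence closed, algebra generated by `A`, it is a
polynomial `q A`, and `q` agrees with `exp` on eigenvalues; so `spectrum (exp A) = exp '' spectrum A`.
If every eigenvalue had negative real part, the spectral radius of `exp A` would be `< 1`, and
Gelfand's formula would give `exp (k • A) = (exp A) ^ k → 0`, against the lower bound on the columns.
-/

open NormedSpace Filter Topology Polynomial

attribute [local instance] Matrix.frobeniusSeminormedAddCommGroup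
  Matrix.frobeniusNormedAddCommGroup Matrix.frobeniusNormedRing Matrix.frobeniusNormedAlgebra

section BanachAlgebra

variable {𝔸 : Type*} [NormedRing 𝔸] [NormedAlgebra ℂ 𝔸] [CompleteSpace 𝔸]

theorem spectrum.re_nonpos_of_norm_exp_smul_le {a : 𝔸} {K : ℝ}
    (hK : ∀ s : ℝ, 0 < s → ‖exp ((s : ℂ) • a)‖ ≤ K) {μ : ℂ} (hμ : μ ∈ spectrum ℂ a) :
    μ.re ≤ 0 := by
  have hexp : ∀ s : ℝ, 0 < s → Real.exp (s * μ.re) ≤ K * ‖(1 : 𝔸)‖ := by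
    intro s hs
    let u := Units.mk0 (s : ℂ) (by exact_mod_cast hs.ne')
    have hsμ : u • μ ∈ spectrum ℂ (u • a) := spectrum.smul_mem_smul_iff.mpr hμ
    have hball := spectrum.subset_closedBall_norm_mul _ (spectrum.exp_mem_exp _ hsμ)
    rw [mem_closedBall_zero_iff, ← Complex.exp_eq_exp_ℂ, Complex.norm_exp] at hball
    calc Real.exp (s * μ.re) = Real.exp (u • μ).re := by simp [u]
      _ ≤ ‖exp (u • a)‖ * ‖(1 : 𝔸)‖ := hball
      _ ≤ K * ‖(1 : 𝔸)‖ := by gcongr; exact hK s hs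
  by_contra! hpos
  have hlim : Tendsto (fun s : ℝ => Real.exp (s * μ.re)) atTop atTop :=
    Real.tendsto_exp_atTop.comp (tendsto_id.atTop_mul_const hpos)
  obtain ⟨s, hs, hsK⟩ :=
    ((eventually_gt_atTop 0).and (hlim.eventually_gt_atTop (K * ‖(1 : 𝔸)‖))).exists
  linarith [hexp s hs]

theorem tendsto_pow_atTop_nhds_zero_of_spectralRadius_lt_one {a : 𝔸}
    (ha : spectralRadius ℂ a < 1) : Tendsto (fun k : ℕ => a ^ k) atTop (𝓝 0) := by
  obtain ⟨r, hρr, hr1⟩ := ENNReal.lt_iff_exists_nnreal_btwn.mp ha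
  have hr1 : r < 1 := by exact_mod_cast hr1
  have hle : ∀ᶠ k : ℕ in atTop, ‖a ^ k‖₊ ≤ r ^ k := by
    have hgelfand := spectrum.pow_nnnorm_pow_one_div_tendsto_nhds_spectralRadius a
    filter_upwards [hgelfand.eventually_lt_const hρr, eventually_ne_atTop 0] with k hk hk0
    have hpow := ENNReal.pow_lt_pow_left hk0 hk
    rw [one_div, ENNReal.rpow_inv_natCast_pow hk0] at hpow
    exact_mod_cast hpow.le
  refine squeeze_zero_norm' ?_ (tendsto_pow_atTop_nhds_zero_of_lt_one r.coe_nonneg hr1)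
  filter_upwards [hle] with k hk
  exact_mod_cast hk

end BanachAlgebra

theorem NormedSpace.exp_mem_adjoin_singleton {𝕜 𝔸 : Type*} [NontriviallyNormedField 𝕜]
    [CompleteSpace 𝕜] [CharZero 𝕜] [Ring 𝔸] [Algebra 𝕜 𝔸] [TopologicalSpace 𝔸]
    [IsTopologicalRing 𝔸] [ContinuousSMul 𝕜 𝔸] [T2Space 𝔸] [FiniteDimensional 𝕜 𝔸] (a : 𝔸) :
    exp a ∈ Algebra.adjoin 𝕜 {a} := by
  have hclosed : IsClosed (Algebra.adjoin 𝕜 {a} : Set 𝔸) :=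
    (Subalgebra.toSubmodule (Algebra.adjoin 𝕜 {a})).closed_of_finiteDimensional
  rw [exp_eq_tsum 𝕜]
  exact tsum_mem hclosed fun k =>
    Subalgebra.smul_mem _ (pow_mem (Algebra.self_mem_adjoin_singleton 𝕜 a) k) _

namespace Matrix

section Frobenius

variable {m n α : Type*} [Fintype m] [Fintype n] [SeminormedAddCommGroup α]

theorem frobenius_norm_sq_eq_sum_norm_col_sq (M : Matrix m n α) :
    ‖M‖ ^ 2 = ∑ j, ‖WithLp.toLp 2 (M.col j)‖ ^ 2 := by
  rw [← frobenius_norm_transpose]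
  exact PiLp.norm_sq_eq_of_L2 _ (WithLp.toLp 2 fun j => WithLp.toLp 2 (Mᵀ j))

theorem norm_toLp_col_le_frobenius_norm (M : Matrix m n α) (j : n) :
    ‖WithLp.toLp 2 (M.col j)‖ ≤ ‖M‖ := by
  refine le_of_sq_le_sq ?_ (norm_nonneg M)
  rw [frobenius_norm_sq_eq_sum_norm_col_sq]
  exact Finset.single_le_sum (f := fun j => ‖WithLp.toLp 2 (M.col j)‖ ^ 2)
    (fun _ _ => sq_nonneg _) (Finset.mem_univ j)

theorem frobenius_norm_le_sum_norm_toLp_col (M : Matrix m n α) :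
    ‖M‖ ≤ ∑ j, ‖WithLp.toLp 2 (M.col j)‖ := by
  refine le_of_sq_le_sq ?_ (Finset.sum_nonneg fun _ _ => norm_nonneg _)
  rw [frobenius_norm_sq_eq_sum_norm_col_sq]
  exact Finset.sum_sq_le_sq_sum_of_nonneg fun _ _ => norm_nonneg _

end Frobenius

variable {m : Type*} [Fintype m] [DecidableEq m]

theorem exp_mulVec_of_mulVec_eq_smul {A : Matrix m m ℂ} {v : m → ℂ} {μ : ℂ}
    (h : A *ᵥ v = μ • v) : exp A *ᵥ v = Complex.exp μ • v := by
  have hpow : ∀ k : ℕ, A ^ k *ᵥ v = μ ^ k • v := by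
    intro k
    induction k with
    | zero => simp
    | succ k ih => rw [pow_succ', ← mulVec_mulVec, ih, mulVec_smul, h, smul_smul, pow_succ]
  have hA : HasSum (fun k : ℕ => ((k.factorial : ℂ)⁻¹ • A ^ k) *ᵥ v) (exp A *ᵥ v) :=
    (exp_series_hasSum_exp' (𝕂 := ℂ) A).map (mulVec.addMonoidHomLeft v)
      (continuous_id.matrix_mulVec continuous_const)
  have hμ := (exp_series_hasSum_exp' (𝕂 := ℂ) μ).smul_const v
  rw [Complex.exp_eq_exp_ℂ]
  refine hA.unique (hμ.congr_fun fun k => ?_)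
  simp [smul_mulVec, hpow, smul_smul]

theorem spectrum_exp [Nonempty m] (A : Matrix m m ℂ) :
    spectrum ℂ (exp A) = Complex.exp '' spectrum ℂ A := by
  obtain ⟨q, hq⟩ : ∃ q : ℂ[X], aeval A q = exp A := by
    rw [← AlgHom.mem_range, ← Algebra.adjoin_singleton_eq_range_aeval]
    exact exp_mem_adjoin_singleton A
  rw [← hq, spectrum.map_polynomial_aeval_of_nonempty _ _
    (spectrum.nonempty_of_isAlgClosed_of_finiteDimensional ℂ A)]
  refine Set.image_congr fun μ hμ => ?_
  rw [← spectrum_toLin', ← Module.End.hasEigenvalue_iff_mem_spectrum] at hμ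
  obtain ⟨v, hv⟩ := hμ.exists_hasEigenvector
  have hAv : A *ᵥ v = μ • v := by rw [← toLin'_apply, hv.apply_eq_smul]
  have hqv : aeval A q *ᵥ v = q.eval μ • v := by
    rw [← Module.End.aeval_apply_of_hasEigenvector hv, ← toLinAlgEquiv'_apply,
      ← aeval_algHom_apply]
    rfl
  refine smul_left_injective ℂ hv.2 (show q.eval μ • v = Complex.exp μ • v from ?_)
  rw [← hqv, hq, exp_mulVec_of_mulVec_eq_smul hAv]

theorem tendsto_exp_nsmul_atTop_nhds_zero {A : Matrix m m ℂ}
    (hA : ∀ μ ∈ spectrum ℂ A, μ.re < 0) : Tendsto (fun k : ℕ => exp (k • A)) atTop (𝓝 0) := by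
  rcases isEmpty_or_nonempty m with hm | hm
  · simpa only [Subsingleton.elim _ (0 : Matrix m m ℂ)] using tendsto_const_nhds
  simp_rw [exp_nsmul]
  refine tendsto_pow_atTop_nhds_zero_of_spectralRadius_lt_one
    (spectrum.spectralRadius_lt_of_forall_lt _ ?_)
  rw [spectrum_exp]
  rintro _ ⟨μ, hμ, rfl⟩
  rw [← NNReal.coe_lt_coe, coe_nnnorm, NNReal.coe_one, Complex.norm_exp, Real.exp_lt_one_iff]
  exact hA μ hμ

end Matrix

theorem eigenvalues_nonpositive_real_part_general (n : ℕ) (hn : 0 < n)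
    (L : Matrix (Fin n) (Fin n) ℂ) (C₁ C₂ : ℝ) (hC₁ : 0 < C₁)
    (hbound : ∀ t : ℝ, 1 ≤ t → ∀ i : Fin n,
      C₁ ≤ Real.sqrt (∑ j, ‖(NormedSpace.exp ((Real.log t : ℂ) • (L - 1))).mulVec
              (Pi.single i 1) j‖ ^ 2) ∧
      Real.sqrt (∑ j, ‖(NormedSpace.exp ((Real.log t : ℂ) • (L - 1))).mulVec
              (Pi.single i 1) j‖ ^ 2) ≤ C₂) :
    (∀ μ ∈ spectrum ℂ (L - 1), μ.re ≤ 0) ∧ ∃ μ ∈ spectrum ℂ (L - 1), μ.re = 0 := by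
  have hcol : ∀ s : ℝ, 0 ≤ s → ∀ i,
      C₁ ≤ ‖WithLp.toLp 2 ((exp ((s : ℂ) • (L - 1))).col i)‖ ∧
      ‖WithLp.toLp 2 ((exp ((s : ℂ) • (L - 1))).col i)‖ ≤ C₂ := by
    intro s hs i
    simpa [EuclideanSpace.norm_eq, Matrix.mulVec_single_one, Real.log_exp] using
      hbound (Real.exp s) (Real.one_le_exp hs) i
  have hre : ∀ μ ∈ spectrum ℂ (L - 1), μ.re ≤ 0 := by
    refine fun μ => spectrum.re_nonpos_of_norm_exp_smul_le (K := n * C₂) fun s hs => ?_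
    calc ‖exp ((s : ℂ) • (L - 1))‖
        ≤ ∑ i, ‖WithLp.toLp 2 ((exp ((s : ℂ) • (L - 1))).col i)‖ :=
          Matrix.frobenius_norm_le_sum_norm_toLp_col _
      _ ≤ ∑ _i : Fin n, C₂ := Finset.sum_le_sum fun i _ => (hcol s hs.le i).2
      _ = n * C₂ := by simp
  refine ⟨hre, ?_⟩
  by_contra! hne
  have hlim := (Matrix.tendsto_exp_nsmul_atTop_nhds_zero fun μ hμ =>
    (hre μ hμ).lt_of_ne (hne μ hμ)).norm
  rw [norm_zero] at hlim
  obtain ⟨k, hk⟩ := (hlim.eventually_lt_const hC₁).exists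
  have hk' := (hcol k k.cast_nonneg ⟨0, hn⟩).1.trans (Matrix.norm_toLp_col_le_frobenius_norm _ _)
  rw [Complex.ofReal_natCast, Nat.cast_smul_eq_nsmul] at hk'
  linarith

/-- Let `L` be a complex `n × n` matrix such that for each standard basis vector `eᵢ`
the norm `|exp ((log t) • (L − I)) eᵢ|` is bounded above and below by positive constants
for all `t ≥ 1`.  Then every eigenvalue of `L − I` has nonpositive real part, and at
least one eigenvalue of `L − I` is purely imaginary. -/
theorem eigenvalues_nonpositive_real_part (n : ℕ) (hn : 0 < n)
    (L : Matrix (Fin n) (Fin n) ℂ) (C₁ C₂ : ℝ) (hC₁ : 0 < C₁) (hC₁₂ : C₁ ≤ C₂)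
    (hbound : ∀ t : ℝ, 1 ≤ t → ∀ i : Fin n,
      C₁ ≤ Real.sqrt (∑ j, ‖(NormedSpace.exp ((Real.log t : ℂ) • (L - 1))).mulVec
              (Pi.single i 1) j‖ ^ 2) ∧
      Real.sqrt (∑ j, ‖(NormedSpace.exp ((Real.log t : ℂ) • (L - 1))).mulVec
              (Pi.single i 1) j‖ ^ 2) ≤ C₂) :
    (∀ μ ∈ spectrum ℂ (L - 1), μ.re ≤ 0) ∧ ∃ μ ∈ spectrum ℂ (L - 1), μ.re = 0 :=
  eigenvalues_nonpositive_real_part_general n hn L C₁ C₂ hC₁ hbound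
end
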